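/- arXiv:2603.29565 — 13 statements merged into one kernel-verified Lean document; each statement's English description precedes it below -/
import Mathlib

section
/- If integers x and y satisfy x^2 - n(n+1)y^2 = -(n(n+1)+16) for a positive integer n, then y is odd. -/
lemma aux_exists_prime_three_mod_four : ∀ m : ℕ, m % 4 = 3 → ∃ p, p.Prime ∧ p % 4 = 3 ∧ p ∣ m := by
  intro m
  induction m using Nat.strong_induction_on with
  | _ m ih =>
    intro hm
    have hm1 : m ≠ 1 := by omega
    have hm0 : m ≠ 0 := by omega
    have hp : m.minFac.Prime := Nat.minFac_prime hm1
    have hpd : m.minFac ∣ m := Nat.minFac_dvd m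
    have hmodd : m % 2 = 1 := by omega
    have hp2 : m.minFac ≠ 2 := by
      intro h2
      have : 2 ∣ m := h2 ▸ hpd
      omega
    have hpodd : m.minFac % 2 = 1 := by
      have hne : ¬ Even m.minFac := fun he => hp2 (hp.even_iff.mp he)
      rw [Nat.even_iff] at hne
      omega
    by_cases hp3 : m.minFac % 4 = 3
    · exact ⟨m.minFac, hp, hp3, hpd⟩
    · have hp1 : m.minFac % 4 = 1 := by omega
      obtain ⟨k, hk⟩ := hpd
      have hklt : k < m := by
        have h1 : 1 < m.minFac := hp.one_lt
        have hk0 : 0 < k := by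
          rcases Nat.eq_zero_or_pos k with h0 | h0
          · subst h0; omega
          · exact h0
        nlinarith
      have hk4 : k % 4 = 3 := by
        have := Nat.mul_mod m.minFac k 4
        rw [← hk, hp1] at this
        omega
      obtain ⟨p, hpp, hpp3, hpdk⟩ := ih k hklt hk4
      refine ⟨p, hpp, hpp3, hpdk.trans ⟨m.minFac, ?_⟩⟩
      conv_lhs => rw [hk]
      ring

theorem stmt_0 (n x y : ℤ) (hn : 0 < n)
    (h : x ^ 2 - n * (n + 1) * y ^ 2 = -(n * (n + 1) + 16)) :
    Odd y := by
  by_contra hy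
  rw [Int.not_odd_iff_even] at hy
  obtain ⟨b, hb⟩ := hy
  have hb2 : y = 2 * b := by omega
  subst hb2
  have key : x ^ 2 + 16 = n * (n + 1) * (4 * b ^ 2 - 1) := by nlinarith [h]
  have hd : 0 < n * (n + 1) := by nlinarith
  have hpos : (0:ℤ) < 4 * b ^ 2 - 1 := by
    by_contra hc
    push_neg at hc
    nlinarith [sq_nonneg x]
  set m : ℕ := (4 * b ^ 2 - 1).toNat with hmdef
  have hmc : (m : ℤ) = 4 * b ^ 2 - 1 := Int.toNat_of_nonneg (by omega)
  have hm4 : m % 4 = 3 := by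
    have hk : (1:ℤ) ≤ b ^ 2 := by nlinarith
    set k : ℤ := b ^ 2 with hkdef
    omega
  obtain ⟨p, hpp, hp3, hpdvd⟩ := aux_exists_prime_three_mod_four m hm4
  haveI : Fact p.Prime := ⟨hpp⟩
  have hpz : (p : ℤ) ∣ x ^ 2 + 16 := by
    have h1 : (p : ℤ) ∣ (m : ℤ) := Int.natCast_dvd_natCast.mpr hpdvd
    rw [hmc] at h1
    exact key ▸ Dvd.dvd.mul_left h1 (n * (n + 1))
  have hzero : ((x : ZMod p) ^ 2 + 16 : ZMod p) = 0 := by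
    have := (ZMod.intCast_zmod_eq_zero_iff_dvd (x ^ 2 + 16) p).mpr hpz
    push_cast at this
    exact this
  have h4ne : (4 : ZMod p) ≠ 0 := by
    intro h4
    have hdvd4 : (p : ℕ) ∣ 4 := by
      have := (ZMod.natCast_eq_zero_iff 4 p).mp (by exact_mod_cast h4)
      exact this
    have hle := Nat.le_of_dvd (by norm_num) hdvd4
    have h2le := hpp.two_le
    interval_cases p <;> omega
  have hsq : IsSquare (-1 : ZMod p) := by
    refine ⟨(x : ZMod p) * (4 : ZMod p)⁻¹, ?_⟩
    have hx2 : ((x : ZMod p)) ^ 2 = -16 := by linear_combination hzero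
    field_simp
    linear_combination -hx2
  rw [ZMod.exists_sq_eq_neg_one_iff] at hsq
  exact hsq hp3
end

section
/- If integers x and y satisfy x^2 - n(n+1)y^2 = -(n(n+1)+16) for a positive integer n, then 4 divides x. -/
lemma odd_sq_add_four (u : ℤ) (hu : Odd u) : ¬ (2 : ℤ) ∣ u ^ 2 + 4 := by
  rcases hu with ⟨m, hm⟩
  subst hm
  rintro ⟨c, hc⟩
  have h1 : (2*m+1)^2 + 4 = 4*m^2+4*m+5 := by ring
  rw [h1] at hc
  omega

lemma aux_div_mod_four (u : ℤ) (hu : Odd u) :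
    ∀ d : ℕ, (d : ℤ) ∣ u ^ 2 + 4 → d % 4 = 1 := by
  intro d
  induction d using Nat.strong_induction_on with
  | _ d ih =>
    intro hd
    have hupos : 0 < u ^ 2 + 4 := by positivity
    rcases Nat.eq_zero_or_pos d with rfl | hdpos
    · simp at hd; omega
    rcases Nat.eq_or_lt_of_le hdpos with h1 | h2
    · omega
    · have hd1 : d ≠ 1 := by omega
      set p := d.minFac with hp
      have hpp : p.Prime := Nat.minFac_prime hd1
      have hpd : p ∣ d := Nat.minFac_dvd d
      have hpz : (p : ℤ) ∣ u ^ 2 + 4 := dvd_trans (Int.natCast_dvd_natCast.mpr hpd) hd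
      have hp2 : p ≠ 2 := by
        intro hpe; rw [hpe] at hpz
        exact odd_sq_add_four u hu (by exact_mod_cast hpz)
      haveI : Fact p.Prime := ⟨hpp⟩
      have h2ne : (2 : ZMod p) ≠ 0 := by
        intro hz
        have : (p : ℕ) ∣ 2 := by
          have := (ZMod.natCast_eq_zero_iff 2 p).mp (by exact_mod_cast hz)
          exact this
        have hle := Nat.le_of_dvd (by norm_num) this
        have := hpp.two_le
        omega
      have hcast : ((u : ZMod p)) ^ 2 + 4 = 0 := by
        have := (ZMod.intCast_zmod_eq_zero_iff_dvd (u ^ 2 + 4) p).mpr hpz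
        push_cast at this
        exact this
      have hsq : IsSquare (-1 : ZMod p) := by
        refine ⟨(u : ZMod p) * 2⁻¹, ?_⟩
        have hu2 : ((u : ZMod p)) ^ 2 = -4 := by linear_combination hcast
        field_simp
        linear_combination -hu2
      have hp4 : p % 4 ≠ 3 := ZMod.exists_sq_eq_neg_one_iff.mp hsq
      have hpodd : p % 2 = 1 := Nat.odd_iff.mp (hpp.odd_of_ne_two hp2)
      have hp41 : p % 4 = 1 := by omega
      obtain ⟨e, he⟩ := hpd
      have hez : (e : ℤ) ∣ u ^ 2 + 4 := dvd_trans (Int.natCast_dvd_natCast.mpr ⟨p, by rw [he]; ring⟩) hd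
      have hene : e ≠ 0 := by rintro rfl; omega
      have helt : e < d := by
        have := hpp.two_le
        rcases Nat.lt_or_ge e d with h | h
        · exact h
        · exfalso; nlinarith
      have he4 : e % 4 = 1 := ih e helt hez
      rw [he, Nat.mul_mod, hp41, he4]

theorem stmt_1 (n x y : ℤ) (hn : 0 < n)
    (h : x ^ 2 - n * (n + 1) * y ^ 2 = -(n * (n + 1) + 16)) :
    (4 : ℤ) ∣ x := by
  have h1 : x ^ 2 + 16 = n * (n + 1) * (y ^ 2 - 1) := by linear_combination h
  obtain ⟨m, hm⟩ : (2 : ℤ) ∣ n * (n + 1) := (Int.even_mul_succ_self n).two_dvd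
  -- x is even
  have hxe : (2 : ℤ) ∣ x := by
    have h2 : (2 : ℤ) ∣ x ^ 2 := ⟨m * (y ^ 2 - 1) - 8, by linear_combination h1 + (y^2-1) * hm⟩
    exact Int.prime_two.dvd_of_dvd_pow h2
  obtain ⟨u, hu⟩ := hxe
  rcases Int.even_or_odd u with ⟨t, ht⟩ | huo
  · exact ⟨t, by rw [hu, ht]; ring⟩
  · -- u odd: derive contradiction
    exfalso
    have h2 : 4 * (u ^ 2 + 4) = n * (n + 1) * (y ^ 2 - 1) := by
      rw [← h1, hu]; ring
    rcases Int.even_or_odd y with ⟨v, hv⟩ | ⟨w, hw⟩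
    · -- y even
      have h3 : 2 * (u ^ 2 + 4) = m * (4 * v ^ 2 - 1) := by
        apply mul_left_cancel₀ (by norm_num : (2 : ℤ) ≠ 0)
        rw [show (2:ℤ) * (2 * (u ^ 2 + 4)) = 4 * (u^2+4) by ring, h2, hm, hv]; ring
      obtain ⟨k, hk⟩ : (2 : ℤ) ∣ m := by
        rcases (Int.prime_two.dvd_mul.mp ⟨u ^ 2 + 4, h3.symm⟩) with hh | hh
        · exact hh
        · exfalso
          obtain ⟨c, hc⟩ := hh
          have : 4 * v ^ 2 - 1 = 2 * c := hc
          have hvv : 0 ≤ v ^ 2 := sq_nonneg v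
          omega
      have h4 : u ^ 2 + 4 = k * (4 * v ^ 2 - 1) := by
        apply mul_left_cancel₀ (by norm_num : (4 : ℤ) ≠ 0)
        rw [h2, hm, hk, hv]; ring
      have hNpos : 0 < n * (n + 1) := by nlinarith
      have hkpos : 0 < k := by nlinarith
      have hupos : 0 < u ^ 2 + 4 := by positivity
      have hdpos : 0 < 4 * v ^ 2 - 1 := by nlinarith
      set d : ℕ := (4 * v ^ 2 - 1).toNat with hdd
      have hdz : (d : ℤ) = 4 * v ^ 2 - 1 := Int.toNat_of_nonneg (by omega)
      have hdvd : (d : ℤ) ∣ u ^ 2 + 4 := ⟨k, by rw [hdz]; linarith [h4]⟩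
      have := aux_div_mod_four u huo d hdvd
      have hvv : 0 ≤ v ^ 2 := sq_nonneg v
      omega
    · -- y odd
      have h3 : u ^ 2 + 4 = 2 * (m * (w ^ 2 + w)) := by
        apply mul_left_cancel₀ (by norm_num : (4 : ℤ) ≠ 0)
        rw [h2, hm, hw]; ring
      exact odd_sq_add_four u huo ⟨m * (w ^ 2 + w), h3⟩
end

section
/- If integers x and y satisfy x^2 - n(n+1)y^2 = -(n(n+1)+16) for a positive integer n with y positive, then y ≥ 3. -/
theorem stmt_2 (n x y : ℤ) (hn : 0 < n) (hy : 0 < y)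
    (h : x ^ 2 - n * (n + 1) * y ^ 2 = -(n * (n + 1) + 16)) :
    3 ≤ y := by
  by_contra hlt
  push_neg at hlt
  interval_cases y
  · nlinarith [sq_nonneg x]
  · have hx : x ^ 2 = 3 * n ^ 2 + 3 * n - 16 := by ring_nf; ring_nf at h; linarith
    have h9 : (x : ZMod 9) ^ 2 = 3 * (n : ZMod 9) ^ 2 + 3 * (n : ZMod 9) - 16 := by
      have := congrArg (fun z : ℤ => (z : ZMod 9)) hx
      push_cast at this
      exact this
    revert h9
    generalize (x : ZMod 9) = a
    generalize (n : ZMod 9) = b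
    revert a b
    decide
end

section
/- If there exist positive integers m and r such that T_n·T_m - 1 = r^2, then every odd prime p dividing n satisfies p ≡ 1 (mod 4). -/
def T (n : ℕ) : ℕ := n * (n + 1) / 2

theorem stmt_4 (n : ℕ) (hn : 0 < n)
    (h : ∃ m r : ℕ, 0 < m ∧ 0 < r ∧ (T n : ℤ) * T m - 1 = (r : ℤ) ^ 2)
    (p : ℕ) (hp : p.Prime) (hodd : Odd p) (hdvd : p ∣ n) :
    p % 4 = 1 := by
  obtain ⟨m, r, hm, hr, heq⟩ := h
  -- p ∣ T n
  have h2 : 2 * T n = n * (n + 1) := by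
    have : 2 ∣ n * (n + 1) := (Nat.even_mul_succ_self n).two_dvd
    unfold T
    omega
  have hpT : p ∣ T n := by
    have hpn : p ∣ n * (n + 1) := hdvd.mul_right _
    rw [← h2] at hpn
    rcases (Nat.Prime.dvd_mul hp).1 hpn with h' | h'
    · exfalso
      have h1 := Nat.le_of_dvd (by norm_num) h'
      have h2 := hp.two_le
      have : p = 2 := by omega
      simp [this, Nat.odd_iff] at hodd
    · exact h'
  -- p ∣ r^2 + 1
  have hdiv : (p : ℤ) ∣ (r : ℤ) ^ 2 + 1 := by
    have : (r : ℤ) ^ 2 + 1 = (T n : ℤ) * T m := by linarith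
    rw [this]
    exact (Int.natCast_dvd_natCast.2 hpT).mul_right _
  haveI : Fact p.Prime := ⟨hp⟩
  have hsq : IsSquare (-1 : ZMod p) := by
    have : ((r : ℤ) ^ 2 + 1 : ℤ) = 0 → True := fun _ => trivial
    have hz : ((r : ZMod p)) ^ 2 + 1 = 0 := by
      have := (ZMod.intCast_zmod_eq_zero_iff_dvd _ p).2 hdiv
      push_cast at this
      exact_mod_cast this
    refine ⟨(r : ZMod p), ?_⟩
    have : ((r : ZMod p)) ^ 2 = -1 := by linear_combination hz
    rw [← this]; ring
  have := (ZMod.exists_sq_eq_neg_one_iff (p := p)).1 hsq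
  have hodd' : p % 2 = 1 := Nat.odd_iff.1 hodd
  omega
end

section
/- If there exist positive integers m and r such that T_n·T_m - 1 = r^2, then every odd prime p dividing n+1 satisfies p ≡ 1 (mod 4). -/
theorem stmt_5 (n : ℕ) (hn : 0 < n)
    (h : ∃ m r : ℕ, 0 < m ∧ 0 < r ∧ (T n : ℤ) * T m - 1 = (r : ℤ) ^ 2)
    (p : ℕ) (hp : p.Prime) (hodd : Odd p) (hdvd : p ∣ (n + 1)) :
    p % 4 = 1 := by
  obtain ⟨m, r, hm, hr, heq⟩ := h
  haveI : Fact p.Prime := ⟨hp⟩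
  have h2 : T n * 2 = n * (n + 1) :=
    Nat.div_mul_cancel (Nat.even_mul_succ_self n).two_dvd
  have hpT : p ∣ T n := by
    have hp2 : p ∣ 2 * (T n) := by
      rw [mul_comm, h2]; exact Dvd.dvd.mul_left hdvd n
    have hco : Nat.Coprime p 2 := by
      rcases hodd with ⟨k, hk⟩
      refine (Nat.Prime.coprime_iff_not_dvd hp).mpr ?_
      intro hd
      have := (Nat.prime_dvd_prime_iff_eq hp Nat.prime_two).mp hd
      omega
    exact hco.dvd_of_dvd_mul_left hp2
  have hz : (T n : ZMod p) = 0 := (ZMod.natCast_eq_zero_iff _ _).mpr hpT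
  have hc := congrArg (Int.cast : ℤ → ZMod p) heq
  push_cast at hc
  rw [hz, zero_mul, zero_sub] at hc
  have hsq : IsSquare (-1 : ZMod p) := ⟨r, by rw [hc]; ring⟩
  have h3 := ZMod.exists_sq_eq_neg_one_iff.mp hsq
  have hp2 : p % 2 = 1 := Nat.odd_iff.mp hodd
  omega
end

section
/- If there exist positive integers m and r such that T_n·T_m - 1 = r^2, then 2^6 does not divide n and 2^6 does not divide n+1. -/
lemma T_two (n : ℕ) : T n * 2 = n * (n + 1) :=
  Nat.div_mul_cancel (Nat.even_mul_succ_self n).two_dvd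

lemma no_sq (n m r : ℕ) (h4 : 4 ∣ T n)
    (h : (T n : ℤ) * T m - 1 = (r : ℤ) ^ 2) : False := by
  have : ((r : ZMod 4)) ^ 2 = -1 := by
    have := congrArg (Int.cast : ℤ → ZMod 4) h
    push_cast at this
    rw [(ZMod.natCast_eq_zero_iff _ _).mpr h4] at this
    linear_combination -this
  revert this
  have : ∀ x : ZMod 4, x ^ 2 ≠ -1 := by decide
  exact this _

theorem stmt_6 (n : ℕ) (hn : 0 < n)
    (h : ∃ m r : ℕ, 0 < m ∧ 0 < r ∧ (T n : ℤ) * T m - 1 = (r : ℤ) ^ 2) :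
    ¬ (2 ^ 6 ∣ n) ∧ ¬ (2 ^ 6 ∣ (n + 1)) := by
  obtain ⟨m, r, -, -, heq⟩ := h
  have key : ¬ (4 ∣ T n) := fun h4 => no_sq n m r h4 heq
  have h2 := T_two n
  constructor
  · rintro ⟨k, rfl⟩
    apply key
    have : T (2 ^ 6 * k) * 2 = 64 * (k * (2 ^ 6 * k + 1)) := by
      rw [h2]; ring
    omega
  · rintro ⟨k, hk⟩
    apply key
    have : T n * 2 = 64 * (n * k) := by rw [h2, hk]; ring
    omega
end

section
/- If there exist positive integers m and r such that T_n·T_m - 1 = r^2, then n is not congruent to 2 modulo 4. -/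
lemma aux_prime3 : ∀ m : ℕ, m % 4 = 3 → ∃ q, q.Prime ∧ q ∣ m ∧ q % 4 = 3 := by
  intro m
  induction m using Nat.strong_induction_on with
  | _ m ih =>
    intro hm
    obtain ⟨p, hp, hpd⟩ := Nat.exists_prime_and_dvd (by omega : m ≠ 1)
    by_cases h3 : p % 4 = 3
    · exact ⟨p, hp, hpd, h3⟩
    · have hp2 : p ≠ 2 := by
        rintro rfl
        obtain ⟨k, hk⟩ := hpd; omega
      have hpodd : p % 2 = 1 := Nat.odd_iff.mp (hp.odd_of_ne_two hp2)
      have hp1 : p % 4 = 1 := by omega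
      obtain ⟨k, hk⟩ := hpd
      have hk3 : k % 4 = 3 := by
        have := Nat.mul_mod p k 4
        rw [← hk, hm, hp1] at this
        omega
      have hkm : k < m := by
        have h2 : 2 ≤ p := hp.two_le
        have hk0 : 0 < k := by rcases Nat.eq_zero_or_pos k with h | h; · omega
                               · exact h
        calc k = 1 * k := (one_mul k).symm
        _ < p * k := Nat.mul_lt_mul_of_lt_of_le (by omega) le_rfl hk0
        _ = m := hk.symm
      obtain ⟨q, hq, hqd, hq3⟩ := ih k hkm hk3
      exact ⟨q, hq, hqd.trans ⟨p, by rw [hk]; ring⟩, hq3⟩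

theorem stmt_8 (n : ℕ) (hn : 0 < n)
    (h : ∃ m r : ℕ, 0 < m ∧ 0 < r ∧ (T n : ℤ) * T m - 1 = (r : ℤ) ^ 2) :
    n % 4 ≠ 2 := by
  intro hn4
  obtain ⟨m, r, hm, hr, heq⟩ := h
  obtain ⟨q, hq, hqd, hq3⟩ := aux_prime3 (n + 1) (by omega)
  -- q ∣ T n
  obtain ⟨a, ha⟩ : ∃ a, n = 2 * a := ⟨n / 2, by omega⟩
  have hTn : T n = a * (n + 1) := by
    unfold T
    subst ha
    have : 2 * a * (2 * a + 1) = 2 * (a * (2 * a + 1)) := by ring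
    rw [this, Nat.mul_div_cancel_left _ (by norm_num)]
  have hqT : (q:ℤ) ∣ (T n : ℤ) := by
    exact_mod_cast Int.natCast_dvd_natCast.mpr (hTn ▸ Dvd.dvd.mul_left hqd a)
  have hdvd : (q:ℤ) ∣ (r:ℤ)^2 + 1 := by
    have : (r:ℤ)^2 + 1 = (T n : ℤ) * T m := by linarith
    rw [this]
    exact hqT.mul_right _
  haveI : Fact q.Prime := ⟨hq⟩
  have hsq : IsSquare (-1 : ZMod q) := by
    refine ⟨(r : ZMod q), ?_⟩
    have h0 : ((((r:ℤ)^2 + 1) : ℤ) : ZMod q) = 0 := by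
      rw [ZMod.intCast_zmod_eq_zero_iff_dvd]; exact hdvd
    push_cast at h0
    linear_combination -h0
  exact ZMod.exists_sq_eq_neg_one_iff.mp hsq hq3
end

section
/- If there exist positive integers m and r such that T_n·T_m - 1 = r^2, then n+1 is not divisible by 4. -/
/-! Reduce modulo `n`: `T n * T m = r ^ 2 + 1` gives `r ^ 2 = -1` in `ZMod n` as soon as `n ∣ T n`,
i.e. for odd `n`; and `-1` is not a square modulo any `n ≡ 3 (mod 4)`, since its Jacobi symbol
there is `χ₄ n = -1`. -/

theorem ZMod.not_isSquare_neg_one_of_mod_four_eq_three {n : ℕ} (hn : n % 4 = 3) :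
    ¬IsSquare (-1 : ZMod n) := by
  have hodd : Odd n := Nat.odd_iff.mpr (by omega)
  have hJ : jacobiSym (-1) n = -1 := by
    rw [jacobiSym.at_neg_one hodd, ZMod.χ₄_nat_three_mod_four hn]
  exact_mod_cast ZMod.nonsquare_of_jacobiSym_eq_neg_one hJ

theorem ZMod.isSquare_neg_one_of_dvd_sq_add_one {n : ℕ} {r : ℤ} (h : (n : ℤ) ∣ r ^ 2 + 1) :
    IsSquare (-1 : ZMod n) := by
  refine ⟨r, ?_⟩
  have h0 : ((r ^ 2 + 1 : ℤ) : ZMod n) = 0 := (ZMod.intCast_zmod_eq_zero_iff_dvd _ n).mpr h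
  push_cast at h0
  linear_combination -h0

theorem T_eq_mul_of_odd {n : ℕ} (hn : Odd n) : T n = n * ((n + 1) / 2) :=
  Nat.mul_div_assoc n (even_iff_two_dvd.mp hn.add_one)

theorem stmt_9_general (n : ℕ)
    (h : ∃ m r : ℕ, 0 < m ∧ 0 < r ∧ (T n : ℤ) * T m - 1 = (r : ℤ) ^ 2) :
    ¬ (4 ∣ (n + 1)) := by
  intro h4
  obtain ⟨m, r, -, -, heq⟩ := h
  have hn3 : n % 4 = 3 := by omega
  have hnT : n ∣ T n := ⟨_, T_eq_mul_of_odd (Nat.odd_iff.mpr (by omega))⟩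
  have hTdvd : (T n : ℤ) ∣ (r : ℤ) ^ 2 + 1 := ⟨T m, by linarith⟩
  exact ZMod.not_isSquare_neg_one_of_mod_four_eq_three hn3 <|
    ZMod.isSquare_neg_one_of_dvd_sq_add_one ((Int.natCast_dvd_natCast.mpr hnT).trans hTdvd)

theorem stmt_9 (n : ℕ) (hn : 0 < n)
    (h : ∃ m r : ℕ, 0 < m ∧ 0 < r ∧ (T n : ℤ) * T m - 1 = (r : ℤ) ^ 2) :
    ¬ (4 ∣ (n + 1)) :=
  stmt_9_general n h
end

section
/- If there exist positive integers m and r with T_n·T_m - 1 = r^2, then both n and n+1 can be written as a sum of two squares. -/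
theorem two_mul_T (n : ℕ) : 2 * T n = n * (n + 1) :=
  Nat.mul_div_cancel' (Nat.even_mul_succ_self n).two_dvd

theorem Nat.eq_sq_add_sq_of_dvd_two_mul {d k : ℕ} (hk : IsSquare (-1 : ZMod k)) (hd : d ∣ 2 * k) :
    ∃ a b : ℕ, d = a ^ 2 + b ^ 2 := by
  rw [Nat.eq_sq_add_sq_iff]
  intro q hq hq3
  have hq : q.Prime := Nat.prime_of_mem_primeFactors hq
  have := Fact.mk hq
  suffices hqd : ¬ q ∣ d by simp [padicValNat.eq_zero_of_not_dvd hqd]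
  intro hqd
  have hq2 : q ≠ 2 := by rintro rfl; norm_num at hq3
  have hqk : q ∣ k :=
    ((Nat.coprime_primes hq Nat.prime_two).mpr hq2).dvd_of_dvd_mul_left (hqd.trans hd)
  exact ZMod.exists_sq_eq_neg_one_iff.mp (ZMod.isSquare_neg_one_of_dvd hqk hk) hq3

theorem stmt_10_general (n : ℕ)
    (h : ∃ m r : ℕ, 0 < m ∧ 0 < r ∧ (T n : ℤ) * T m - 1 = (r : ℤ) ^ 2) :
    (∃ a b : ℕ, n = a ^ 2 + b ^ 2) ∧ (∃ a b : ℕ, n + 1 = a ^ 2 + b ^ 2) := by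
  obtain ⟨m, r, -, -, heq⟩ := h
  have hprod : T n * T m = r ^ 2 + 1 := by
    have : (T n * T m : ℤ) = r ^ 2 + 1 := by linarith
    exact_mod_cast this
  have hdvd : n * (n + 1) ∣ 2 * (r ^ 2 + 1) := ⟨T m, by rw [← hprod, ← two_mul_T, mul_assoc]⟩
  have hneg : IsSquare (-1 : ZMod (r ^ 2 + 1)) :=
    ZMod.isSquare_neg_one_of_eq_sq_add_sq_of_coprime (by ring) (Nat.coprime_one_right r)
  exact ⟨Nat.eq_sq_add_sq_of_dvd_two_mul hneg ((dvd_mul_right _ _).trans hdvd),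
    Nat.eq_sq_add_sq_of_dvd_two_mul hneg ((dvd_mul_left _ _).trans hdvd)⟩

theorem stmt_10 (n : ℕ) (hn : 0 < n)
    (h : ∃ m r : ℕ, 0 < m ∧ 0 < r ∧ (T n : ℤ) * T m - 1 = (r : ℤ) ^ 2) :
    (∃ a b : ℕ, n = a ^ 2 + b ^ 2) ∧ (∃ a b : ℕ, n + 1 = a ^ 2 + b ^ 2) :=
  stmt_10_general n h
end

section
/- There do not exist integers x, y satisfying x^2 - 100·101·y^2 = -(100·101 + 16). Consequently, T_{100} is not a member of any D(-1)-pair of triangular numbers. -/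
lemma no_sol : ∀ y : ℕ, ∀ x : ℤ, 0 ≤ x → x ^ 2 - 10100 * (y : ℤ) ^ 2 ≠ -10116 := by
  intro y
  induction y using Nat.strong_induction_on with
  | _ y ih =>
    intro x hx h
    by_cases hy : y ≤ 10
    · interval_cases y <;> norm_num at h
      · nlinarith [sq_nonneg x]
      · nlinarith [sq_nonneg x]
      · rcases le_or_gt x 174 with h1 | h1 <;> nlinarith
      · rcases le_or_gt x 284 with h1 | h1 <;> nlinarith
      · rcases le_or_gt x 389 with h1 | h1 <;> nlinarith
      · rcases le_or_gt x 492 with h1 | h1 <;> nlinarith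
      · rcases le_or_gt x 594 with h1 | h1 <;> nlinarith
      · rcases le_or_gt x 696 with h1 | h1 <;> nlinarith
      · rcases le_or_gt x 797 with h1 | h1 <;> nlinarith
      · rcases le_or_gt x 898 with h1 | h1 <;> nlinarith
      · rcases le_or_gt x 999 with h1 | h1 <;> nlinarith
    · push_neg at hy
      have hy11 : (11 : ℤ) ≤ (y : ℤ) := by exact_mod_cast hy
      have h1 : 100 * (y : ℤ) < x := by nlinarith
      have h2 : 2 * x < 201 * (y : ℤ) := by nlinarith
      set y' : ℤ := 201 * (y : ℤ) - 2 * x with hy'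
      have hy'0 : 0 ≤ y' := by omega
      have hy'lt : y' < (y : ℤ) := by omega
      set n' : ℕ := y'.toNat with hn'
      have hcast : (n' : ℤ) = y' := Int.toNat_of_nonneg hy'0
      have hlt : n' < y := by
        have : (n' : ℤ) < (y : ℤ) := by rw [hcast]; exact hy'lt
        exact_mod_cast this
      set x' : ℤ := 201 * x - 20200 * (y : ℤ) with hx'
      have hkey : x' ^ 2 - 10100 * (n' : ℤ) ^ 2 = -10116 := by
        rw [hcast]; nlinarith [h]
      rcases le_or_gt 0 x' with h3 | h3
      · exact ih n' hlt x' h3 hkey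
      · refine ih n' hlt (-x') (by omega) ?_
        rw [neg_pow]; simpa using hkey

theorem stmt_13 :
    (¬ ∃ x y : ℤ, x ^ 2 - 100 * 101 * y ^ 2 = -(100 * 101 + 16)) ∧
    ¬ ∃ m r : ℕ, 0 < m ∧ 0 < r ∧ (T 100 : ℤ) * T m - 1 = (r : ℤ) ^ 2 := by
  constructor
  · rintro ⟨x, y, h⟩
    have hy2 : ((y.natAbs : ℤ)) ^ 2 = y ^ 2 := by
      rw [Int.natAbs_pow_two]
    refine no_sol y.natAbs |x| (abs_nonneg x) ?_
    rw [sq_abs, hy2]; linarith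
  · rintro ⟨m, r, hm, hr, h⟩
    have hT100 : (T 100 : ℤ) = 5050 := by norm_num [T]
    have hTm : 2 * (T m : ℤ) = (m : ℤ) * ((m : ℤ) + 1) := by
      have : 2 * T m = m * (m + 1) := by
        rw [T, Nat.mul_div_cancel']
        exact even_iff_two_dvd.mp (Nat.even_mul_succ_self m)
      exact_mod_cast this
    refine no_sol (2 * m + 1) (4 * (r : ℤ)) (by positivity) ?_
    push_cast
    nlinarith [h, hT100, hTm]
end

section
/- The pair (X, Y) = (2n+1, 2) is the fundamental (least positive) solution of the Pell equation X^2 - n(n+1)Y^2 = 1, for every positive integer n. -/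
theorem stmt_14 (n : ℤ) (hn : 0 < n) :
    (2 * n + 1) ^ 2 - n * (n + 1) * 2 ^ 2 = 1 ∧
    ∀ X Y : ℤ, 0 < X → 0 < Y → X ^ 2 - n * (n + 1) * Y ^ 2 = 1 →
      2 * n + 1 ≤ X ∧ 2 ≤ Y := by
  refine ⟨by ring, ?_⟩
  intro X Y hX hY h
  have hY2 : 2 ≤ Y := by
    by_contra hc
    push_neg at hc
    interval_cases Y
    · -- Y = 1 : X^2 = n^2 + n + 1, impossible
      have h1 : X ^ 2 = n ^ 2 + n + 1 := by linarith [h]; 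
      have hXn : n < X := by nlinarith
      have hXn1 : X < n + 1 := by nlinarith
      omega
  refine ⟨?_, hY2⟩
  have h0 : (0:ℤ) ≤ n * (n + 1) * ((Y - 2) * (Y + 2)) :=
    mul_nonneg (mul_nonneg hn.le (by linarith)) (mul_nonneg (by linarith) (by linarith))
  nlinarith [h0, mul_pos hX hX]
end

section
/- Let n be a positive integer and let odd positive integers y_k = 2m_k + 1 and y_{k+1} = 2m_{k+1} + 1 satisfy y_{k+1}^2 - 2(2n+1)y_k y_{k+1} + y_k^2 = -4(n(n+1)+16) and 8 | (y_k y_{k+1} - (2n+1)). Then T_{m_k}·T_{m_{k+1}} - 1 = ((y_k y_{k+1} - (2n+1))/8)^2, a perfect square. -/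
lemma T_cast (m : ℕ) : (T m : ℤ) * 2 = (m : ℤ) * (m + 1) := by
  have h2 : 2 ∣ m * (m + 1) := (Nat.even_mul_succ_self m).two_dvd
  have : T m * 2 = m * (m + 1) := Nat.div_mul_cancel h2
  exact_mod_cast congrArg (Nat.cast : ℕ → ℤ) this

theorem stmt_17 (n m m' : ℕ) (hn : 0 < n) (y y' : ℤ)
    (hy : y = 2 * (m : ℤ) + 1) (hy' : y' = 2 * (m' : ℤ) + 1)
    (heq : y' ^ 2 - 2 * (2 * (n : ℤ) + 1) * y * y' + y ^ 2 = -4 * ((n : ℤ) * (n + 1) + 16))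
    (hdvd : (8 : ℤ) ∣ (y * y' - (2 * (n : ℤ) + 1))) :
    (T m : ℤ) * T m' - 1 = ((y * y' - (2 * (n : ℤ) + 1)) / 8) ^ 2 := by
  obtain ⟨c, hc⟩ := hdvd
  rw [hc, Int.mul_ediv_cancel_left _ (by norm_num)]
  have h1 : 8 * (T m : ℤ) + 1 = y ^ 2 := by
    have := T_cast m; nlinarith [this]
  have h2 : 8 * (T m' : ℤ) + 1 = y' ^ 2 := by
    have := T_cast m'; nlinarith [this]
  have h12 : (8*(T m:ℤ)+1)*(8*(T m':ℤ)+1) = y^2*y'^2 := by rw [h1, h2]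
  have hc2 : (y*y' - (2*(n:ℤ)+1))^2 = 64*c^2 := by rw [hc]; ring
  have key : (64:ℤ)*((T m:ℤ)*T m' - 1) = 64*c^2 := by
    linear_combination h12 - h1 - h2 + hc2 - heq
  exact mul_left_cancel₀ (by norm_num) key
end

section
/- If n is a positive integer such that {T_n, T_m} is a D(-1)-pair for some positive integer m, then there exist infinitely many pairs of positive integers (m, m') with m < m' such that {T_n, T_m, T_{m'}} is a D(-1)-triple, i.e., each of T_n·T_m - 1, T_n·T_{m'} - 1, and T_m·T_{m'} - 1 is a perfect square. -/
lemma T_two_mul (k : ℕ) : (2 : ℤ) * (T k : ℤ) = (k : ℤ) * ((k : ℤ) + 1) := by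
  have h2 : 2 ∣ k * (k + 1) := (Nat.even_mul_succ_self k).two_dvd
  have : 2 * T k = k * (k + 1) := by
    rw [T, Nat.mul_div_cancel' h2]
  exact_mod_cast congrArg (fun x : ℕ => (x : ℤ)) this

lemma step_lemma (n m r : ℕ) (hn : 0 < n) (hm : 0 < m) (hr : 0 < r)
    (h : (T n : ℤ) * T m - 1 = (r : ℤ) ^ 2) :
    ∃ m' r' s : ℕ, m < m' ∧ n < m' ∧ 0 < r' ∧ 0 < s ∧
      (T n : ℤ) * T m' - 1 = (r' : ℤ) ^ 2 ∧ (T m : ℤ) * T m' - 1 = (s : ℤ) ^ 2 := by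
  refine ⟨m + n + 2 * n * m + 4 * r, (2 * n + 1) * r + T n * (2 * m + 1),
    (2 * m + 1) * r + T m * (2 * n + 1), by omega, by omega, ?_, ?_, ?_, ?_⟩
  · have := Nat.mul_pos (show 0 < 2 * n + 1 by omega) hr
    omega
  · have := Nat.mul_pos (show 0 < 2 * m + 1 by omega) hr
    omega
  · have hA := T_two_mul n
    have hB := T_two_mul m
    have hC := T_two_mul (m + n + 2 * n * m + 4 * r)
    have hrel : ((n : ℤ) * ((n : ℤ) + 1)) * ((m : ℤ) * ((m : ℤ) + 1))
        = 4 * (r : ℤ) ^ 2 + 4 := by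
      linear_combination (-(m : ℤ) * ((m : ℤ) + 1)) * hA - 2 * (T n : ℤ) * hB + 4 * h
    push_cast at hC ⊢
    have h4 : 4 * ((T n : ℤ) * (T (m + n + 2 * n * m + 4 * r) : ℤ) - 1)
        = 4 * (((2 * (n : ℤ) + 1) * (r : ℤ) + (T n : ℤ) * (2 * (m : ℤ) + 1)) ^ 2) := by
      linear_combination hrel + ((n : ℤ) * ((n : ℤ) + 1)) * hC +
        (2 * (T (m + n + 2 * n * m + 4 * r) : ℤ)
          - 2 * (2 * (2 * (n : ℤ) + 1) * (r : ℤ) + (n : ℤ) * ((n : ℤ) + 1) * (2 * (m : ℤ) + 1)) * (2 * (m : ℤ) + 1)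
          - (2 * (m : ℤ) + 1) ^ 2 * (2 * (T n : ℤ) - (n : ℤ) * ((n : ℤ) + 1))) * hA
    have := mul_left_cancel₀ (show (4 : ℤ) ≠ 0 by norm_num) h4
    linarith [this]
  · have hA := T_two_mul n
    have hB := T_two_mul m
    have hC := T_two_mul (m + n + 2 * n * m + 4 * r)
    have hrel : ((n : ℤ) * ((n : ℤ) + 1)) * ((m : ℤ) * ((m : ℤ) + 1))
        = 4 * (r : ℤ) ^ 2 + 4 := by
      linear_combination (-(m : ℤ) * ((m : ℤ) + 1)) * hA - 2 * (T n : ℤ) * hB + 4 * h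
    push_cast at hC ⊢
    have h4 : 4 * ((T m : ℤ) * (T (m + n + 2 * n * m + 4 * r) : ℤ) - 1)
        = 4 * (((2 * (m : ℤ) + 1) * (r : ℤ) + (T m : ℤ) * (2 * (n : ℤ) + 1)) ^ 2) := by
      linear_combination hrel + ((m : ℤ) * ((m : ℤ) + 1)) * hC +
        (2 * (T (m + n + 2 * n * m + 4 * r) : ℤ)
          - 2 * (2 * (2 * (m : ℤ) + 1) * (r : ℤ) + (m : ℤ) * ((m : ℤ) + 1) * (2 * (n : ℤ) + 1)) * (2 * (n : ℤ) + 1)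
          - (2 * (n : ℤ) + 1) ^ 2 * (2 * (T m : ℤ) - (m : ℤ) * ((m : ℤ) + 1))) * hB
    have := mul_left_cancel₀ (show (4 : ℤ) ≠ 0 by norm_num) h4
    linarith [this]

lemma chain (n : ℕ) (hn : 0 < n)
    (h : ∃ m r : ℕ, 0 < m ∧ m ≠ n ∧ 0 < r ∧ (T n : ℤ) * T m - 1 = (r : ℤ) ^ 2) :
    ∀ N : ℕ, ∃ m r : ℕ, N < m ∧ m ≠ n ∧ 0 < r ∧ (T n : ℤ) * T m - 1 = (r : ℤ) ^ 2 := by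
  intro N
  induction N with
  | zero =>
    obtain ⟨m, r, hm, hmn, hr, hsq⟩ := h
    exact ⟨m, r, hm, hmn, hr, hsq⟩
  | succ k ih =>
    obtain ⟨m, r, hm, hmn, hr, hsq⟩ := ih
    by_cases hk : k + 1 < m
    · exact ⟨m, r, hk, hmn, hr, hsq⟩
    · obtain ⟨m', r', s, hmm', hnm', hr', hs, hsq1, hsq2⟩ :=
        step_lemma n m r hn (by omega) hr hsq
      exact ⟨m', r', by omega, by omega, hr', hsq1⟩

theorem stmt_19 (n : ℕ) (hn : 0 < n)
    (h : ∃ m r : ℕ, 0 < m ∧ m ≠ n ∧ 0 < r ∧ (T n : ℤ) * T m - 1 = (r : ℤ) ^ 2) :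
    ∀ N : ℕ, ∃ m m' : ℕ, N < m ∧ m < m' ∧ m ≠ n ∧ m' ≠ n ∧
      (∃ r : ℕ, 0 < r ∧ (T n : ℤ) * T m - 1 = (r : ℤ) ^ 2) ∧
      (∃ r : ℕ, 0 < r ∧ (T n : ℤ) * T m' - 1 = (r : ℤ) ^ 2) ∧
      (∃ r : ℕ, 0 < r ∧ (T m : ℤ) * T m' - 1 = (r : ℤ) ^ 2) := by
  intro N
  obtain ⟨m, r, hNm, hmn, hr, hsq⟩ := chain n hn h N
  obtain ⟨m', r', s, hmm', hnm', hr', hs, hsq1, hsq2⟩ :=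
    step_lemma n m r hn (by omega) hr hsq
  exact ⟨m, m', hNm, hmm', hmn, by omega, ⟨r, hr, hsq⟩, ⟨r', hr', hsq1⟩, ⟨s, hs, hsq2⟩⟩
end
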